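/- arXiv:1701.03280 — 11 statements merged into one kernel-verified Lean document; each statement's English description precedes it below -/
import Mathlib

section
/- Suppose 𝒯_A^S ⊆ 𝒯 is secret towards the agent B = (∼_B, 𝒯_B). Then pre- and post-processing cannot lift the secrecy: for every N ∈ ℕ, all g_A^1, …, g_A^N ∈ 𝒯_A^S, all f_B^1, …, f_B^N ∈ 𝒯_B, every f ∈ 𝒯 and every ρ ∈ Ω, one has f_B^N(g_A^N(⋯ f_B^2(g_A^2(f_B^1(g_A^1(f(ρ))))) ⋯)) ∼_B f_B^N(f_B^{N−1}(⋯ f_B^1(f(ρ)) ⋯)). -/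
/-- Interleaved chain `f_B^n ∘ g_A^n ∘ ⋯ ∘ f_B^1 ∘ g_A^1` (indices `0,…,n-1`). -/
def chainAB {Ω : Type*} (fB gA : ℕ → Ω → Ω) : ℕ → Ω → Ω
  | 0 => id
  | n + 1 => fB n ∘ gA n ∘ chainAB fB gA n

/-- Chain `f_B^n ∘ ⋯ ∘ f_B^1` (indices `0,…,n-1`). -/
def chainB {Ω : Type*} (fB : ℕ → Ω → Ω) : ℕ → Ω → Ω
  | 0 => id
  | n + 1 => fB n ∘ chainB fB n

/-!
Induction on the length of the chain, carrying an arbitrary post-processing `h ∈ 𝒯_B`: the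
last secret step `g_A^n` is absorbed by secrecy applied to the post-processing `h ∘ f_B^n`,
which is again in `𝒯_B`, and the remaining shorter chains are related by the induction
hypothesis for `h ∘ f_B^n`.
-/

theorem comp_chainAB_rel_comp_chainB {Ω : Type*} {TB TAS : Set (Ω → Ω)} {r : Ω → Ω → Prop}
    (hrefl : ∀ x, r x x) (htrans : ∀ {x y z}, r x y → r y z → r x z)
    (hTBcomp : ∀ f ∈ TB, ∀ g ∈ TB, f ∘ g ∈ TB)
    (hsecret : ∀ ρ : Ω, ∀ gA ∈ TAS, ∀ fB ∈ TB, r (fB (gA ρ)) (fB ρ))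
    {gA fB : ℕ → Ω → Ω} (hgA : ∀ i, gA i ∈ TAS) (hfB : ∀ i, fB i ∈ TB) (n : ℕ)
    {h : Ω → Ω} (hh : h ∈ TB) (x : Ω) : r (h (chainAB fB gA n x)) (h (chainB fB n x)) := by
  induction n generalizing h with
  | zero => exact hrefl _
  | succ n ih =>
    have hhf : h ∘ fB n ∈ TB := hTBcomp h hh (fB n) (hfB n)
    exact htrans (hsecret _ (gA n) (hgA n) _ hhf) (ih hhf)

theorem robustness_of_secrecy_general {Ω : Type*} (TB TAS : Set (Ω → Ω))
    (simB : Ω → Ω → Prop) (hequiv : Equivalence simB)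
    -- `𝒯_B ⊆ 𝒯` is a submonoid
    (hTBid : id ∈ TB) (hTBcomp : ∀ f ∈ TB, ∀ g ∈ TB, f ∘ g ∈ TB)
    -- secrecy of `𝒯_A^S` towards `B`
    (hsecret : ∀ ρ : Ω, ∀ gA ∈ TAS, ∀ fB ∈ TB, simB (fB (gA ρ)) (fB ρ))
    -- arbitrary pre- and post-processing
    (N : ℕ) (gA fB : ℕ → Ω → Ω)
    (hgA : ∀ i, gA i ∈ TAS) (hfB : ∀ i, fB i ∈ TB)
    (f : Ω → Ω) (ρ : Ω) :
    simB (chainAB fB gA N (f ρ)) (chainB fB N (f ρ)) :=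
  comp_chainAB_rel_comp_chainB hequiv.refl hequiv.trans hTBcomp hsecret hgA hfB
    N hTBid (f ρ)

/-- **Robustness of secrecy.** If `𝒯_A^S` is secret towards the agent `B = (∼_B, 𝒯_B)`,
then pre- and post-processing cannot lift the secrecy. -/
theorem robustness_of_secrecy {Ω : Type*} (T TB TAS : Set (Ω → Ω))
    (simB : Ω → Ω → Prop) (hequiv : Equivalence simB)
    -- `𝒯` is a submonoid of functions `Ω → Ω`
    (hTid : id ∈ T) (hTcomp : ∀ f ∈ T, ∀ g ∈ T, f ∘ g ∈ T)
    -- `𝒯_B ⊆ 𝒯` is a submonoid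
    (hTB : TB ⊆ T) (hTBid : id ∈ TB) (hTBcomp : ∀ f ∈ TB, ∀ g ∈ TB, f ∘ g ∈ TB)
    -- `𝒯_A^S ⊆ 𝒯`
    (hTAS : TAS ⊆ T)
    -- secrecy of `𝒯_A^S` towards `B`
    (hsecret : ∀ ρ : Ω, ∀ gA ∈ TAS, ∀ fB ∈ TB, simB (fB (gA ρ)) (fB ρ))
    -- arbitrary pre- and post-processing
    (N : ℕ) (gA fB : ℕ → Ω → Ω)
    (hgA : ∀ i, gA i ∈ TAS) (hfB : ∀ i, fB i ∈ TB)
    (f : Ω → Ω) (hf : f ∈ T) (ρ : Ω) :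
    simB (chainAB fB gA N (f ρ)) (chainB fB N (f ρ)) :=
  robustness_of_secrecy_general TB TAS simB hequiv hTBid hTBcomp hsecret N gA fB hgA hfB f ρ
end

section
/- Suppose 𝒯_A^S ⊆ 𝒯 is secret towards the agent B = (∼_B, 𝒯_B) and is moreover secret towards B in the presence of f ∈ 𝒯. Then further pre- and post-processing cannot lift the extended secrecy: for every N ∈ ℕ, all g_A^1, …, g_A^N, g'_A^1, …, g'_A^N ∈ 𝒯_A^S, all f_B^1, …, f_B^N, f'_B^1, …, f'_B^N ∈ 𝒯_B, every g ∈ 𝒯 and every ρ ∈ Ω, one has (f_B^N ∘ g_A^N ∘ ⋯ ∘ f_B^1 ∘ g_A^1) ∘ f ∘ (f'_B^N ∘ g'_A^N ∘ ⋯ ∘ f'_B^1 ∘ g'_A^1) ∘ g (ρ) ∼_B (f_B^N ∘ ⋯ ∘ f_B^1) ∘ f ∘ (f'_B^N ∘ ⋯ ∘ f'_B^1) ∘ g (ρ). -/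
theorem chainB_mem {Ω : Type*} {TB : Set (Ω → Ω)} (hid : id ∈ TB)
    (hcomp : ∀ f ∈ TB, ∀ g ∈ TB, f ∘ g ∈ TB) {fB : ℕ → Ω → Ω} (hfB : ∀ i, fB i ∈ TB) :
    ∀ n, chainB fB n ∈ TB
  | 0 => hid
  | n + 1 => hcomp _ (hfB n) _ (chainB_mem hid hcomp hfB n)

theorem rel_chainAB_chainB {Ω β : Type*} {r : β → β → Prop} (hr : Equivalence r)
    {C : Set (Ω → β)} {TB TAS : Set (Ω → Ω)} (hC : ∀ c ∈ C, ∀ b ∈ TB, c ∘ b ∈ C)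
    (hsecret : ∀ c ∈ C, ∀ a ∈ TAS, ∀ ρ, r (c (a ρ)) (c ρ))
    {fB gA : ℕ → Ω → Ω} (hfB : ∀ i, fB i ∈ TB) (hgA : ∀ i, gA i ∈ TAS) :
    ∀ n, ∀ c ∈ C, ∀ σ, r (c (chainAB fB gA n σ)) (c (chainB fB n σ))
  | 0, _, _, _ => hr.refl _
  | n + 1, c, hc, σ =>
    have hc' : c ∘ fB n ∈ C := hC c hc _ (hfB n)
    hr.trans (hsecret _ hc' _ (hgA n) _)
      (rel_chainAB_chainB hr hC hsecret hfB hgA n _ hc' σ)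

theorem robustness_of_extended_secrecy_general {Ω : Type*} (TB TAS : Set (Ω → Ω))
    (simB : Ω → Ω → Prop) (hequiv : Equivalence simB)
    -- `𝒯_B ⊆ 𝒯` is a submonoid
    (hTBid : id ∈ TB) (hTBcomp : ∀ f ∈ TB, ∀ g ∈ TB, f ∘ g ∈ TB)
    (f : Ω → Ω)
    -- secrecy of `𝒯_A^S` towards `B`
    (hsecret : ∀ ρ : Ω, ∀ gA ∈ TAS, ∀ fB ∈ TB, simB (fB (gA ρ)) (fB ρ))
    -- extended secrecy of `𝒯_A^S` towards `B` in the presence of `f`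
    (hext : ∀ ρ : Ω, ∀ gA ∈ TAS, ∀ fB ∈ TB, ∀ fB' ∈ TB,
      simB (fB (f (fB' (gA ρ)))) (fB (f (fB' ρ))))
    -- arbitrary pre- and post-processing
    (N : ℕ) (gA gA' fB fB' : ℕ → Ω → Ω)
    (hgA : ∀ i, gA i ∈ TAS) (hgA' : ∀ i, gA' i ∈ TAS)
    (hfB : ∀ i, fB i ∈ TB) (hfB' : ∀ i, fB' i ∈ TB)
    (g : Ω → Ω) (ρ : Ω) :
    simB (chainAB fB gA N (f (chainAB fB' gA' N (g ρ))))
         (chainB fB N (f (chainB fB' N (g ρ)))) := by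
  have post := rel_chainAB_chainB hequiv hTBcomp
    (fun c hc a ha ρ => hsecret ρ a ha c hc) hfB hgA N id hTBid
  have pre := rel_chainAB_chainB (C := Set.image2 (fun c h => c ∘ f ∘ h) TB TB) hequiv
    (by
      rintro _ ⟨c, hc, h, hh, rfl⟩ b hb
      exact ⟨c, hc, h ∘ b, hTBcomp _ hh _ hb, rfl⟩)
    (by
      rintro _ ⟨c, hc, h, hh, rfl⟩ a ha ρ
      exact hext ρ a ha c hc h hh)
    hfB' hgA' N _ (Set.mem_image2_of_mem (chainB_mem hTBid hTBcomp hfB N) hTBid)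
  exact hequiv.trans (post _) (pre _)

/-- **Robustness of extended secrecy.** If `𝒯_A^S` is secret towards the agent
`B = (∼_B, 𝒯_B)`, and moreover secret towards `B` in the presence of `f ∈ 𝒯`, then
further pre- and post-processing cannot lift the extended secrecy. -/
theorem robustness_of_extended_secrecy {Ω : Type*} (T TB TAS : Set (Ω → Ω))
    (simB : Ω → Ω → Prop) (hequiv : Equivalence simB)
    -- `𝒯` is a submonoid of functions `Ω → Ω`
    (hTid : id ∈ T) (hTcomp : ∀ f ∈ T, ∀ g ∈ T, f ∘ g ∈ T)
    -- `𝒯_B ⊆ 𝒯` is a submonoid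
    (hTB : TB ⊆ T) (hTBid : id ∈ TB) (hTBcomp : ∀ f ∈ TB, ∀ g ∈ TB, f ∘ g ∈ TB)
    -- `𝒯_A^S ⊆ 𝒯`
    (hTAS : TAS ⊆ T)
    (f : Ω → Ω) (hf : f ∈ T)
    -- secrecy of `𝒯_A^S` towards `B`
    (hsecret : ∀ ρ : Ω, ∀ gA ∈ TAS, ∀ fB ∈ TB, simB (fB (gA ρ)) (fB ρ))
    -- extended secrecy of `𝒯_A^S` towards `B` in the presence of `f`
    (hext : ∀ ρ : Ω, ∀ gA ∈ TAS, ∀ fB ∈ TB, ∀ fB' ∈ TB,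
      simB (fB (f (fB' (gA ρ)))) (fB (f (fB' ρ))))
    -- arbitrary pre- and post-processing
    (N : ℕ) (gA gA' fB fB' : ℕ → Ω → Ω)
    (hgA : ∀ i, gA i ∈ TAS) (hgA' : ∀ i, gA' i ∈ TAS)
    (hfB : ∀ i, fB i ∈ TB) (hfB' : ∀ i, fB' i ∈ TB)
    (g : Ω → Ω) (hg : g ∈ T) (ρ : Ω) :
    simB (chainAB fB gA N (f (chainAB fB' gA' N (g ρ))))
         (chainB fB N (f (chainB fB' N (g ρ)))) :=
  robustness_of_extended_secrecy_general TB TAS simB hequiv hTBid hTBcomp f hsecret hext N gA gA' fB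
    fB' hgA hgA' hfB hfB' g ρ
end

section
/- Let B = (∼_B, 𝒯_B) be an agent, 𝒯_A ⊆ 𝒯 a submonoid, and f ∈ 𝒯. Then the set 𝒯_A^S of all elements of 𝒯_A that are both secret towards B and secret towards B in the presence of f forms a monoid: it contains the identity transformation, and if f_A, g_A ∈ 𝒯_A^S then f_A ∘ g_A ∈ 𝒯_A^S. -/
/-- A single transformation `g` is secret towards the agent `B = (∼_B, 𝒯_B)`. -/
def SecretTowards {Ω : Type*} (simB : Ω → Ω → Prop) (TB : Set (Ω → Ω))
    (g : Ω → Ω) : Prop :=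
  ∀ ρ : Ω, ∀ fB ∈ TB, simB (fB (g ρ)) (fB ρ)

/-- A single transformation `g` is secret towards `B = (∼_B, 𝒯_B)` in the presence
of a global transformation `f`. -/
def SecretTowardsInPresence {Ω : Type*} (simB : Ω → Ω → Prop) (TB : Set (Ω → Ω))
    (f g : Ω → Ω) : Prop :=
  ∀ ρ : Ω, ∀ fB ∈ TB, ∀ fB' ∈ TB, simB (fB (f (fB' (g ρ)))) (fB (f (fB' ρ)))

/-- The set `𝒯_A^S` of elements of `𝒯_A` that are secret towards `B` and secret
towards `B` in the presence of `f`. -/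
def secretSet {Ω : Type*} (simB : Ω → Ω → Prop) (TA TB : Set (Ω → Ω))
    (f : Ω → Ω) : Set (Ω → Ω) :=
  {g ∈ TA | SecretTowards simB TB g ∧ SecretTowardsInPresence simB TB f g}

/-! Both secrecy notions compare `g ρ` with `ρ` after post-processing by a fixed context,
so `id` is secret by reflexivity and, since `(g ∘ g') ρ = g (g' ρ)`, secrecy of `g` at the
point `g' ρ` chains with secrecy of `g'` at `ρ` by transitivity. -/

section Secrecy

variable {Ω : Type*} {simB : Ω → Ω → Prop} {TB : Set (Ω → Ω)}

theorem SecretTowards.id [Std.Refl simB] : SecretTowards simB TB id :=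
  fun ρ fB _ => refl_of simB (fB ρ)

theorem SecretTowards.comp [IsTrans Ω simB] {g g' : Ω → Ω}
    (hg : SecretTowards simB TB g) (hg' : SecretTowards simB TB g') :
    SecretTowards simB TB (g ∘ g') :=
  fun ρ fB hfB => trans_of simB (hg (g' ρ) fB hfB) (hg' ρ fB hfB)

theorem SecretTowardsInPresence.id [Std.Refl simB] (f : Ω → Ω) :
    SecretTowardsInPresence simB TB f id :=
  fun ρ fB _ fB' _ => refl_of simB (fB (f (fB' ρ)))

theorem SecretTowardsInPresence.comp [IsTrans Ω simB] {f g g' : Ω → Ω}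
    (hg : SecretTowardsInPresence simB TB f g) (hg' : SecretTowardsInPresence simB TB f g') :
    SecretTowardsInPresence simB TB f (g ∘ g') :=
  fun ρ fB hfB fB' hfB' => trans_of simB (hg (g' ρ) fB hfB fB' hfB') (hg' ρ fB hfB fB' hfB')

variable {TA : Set (Ω → Ω)}

theorem id_mem_secretSet [Std.Refl simB] (hTAid : id ∈ TA) (f : Ω → Ω) :
    id ∈ secretSet simB TA TB f :=
  ⟨hTAid, SecretTowards.id, SecretTowardsInPresence.id f⟩

theorem comp_mem_secretSet [IsTrans Ω simB]
    (hTAcomp : ∀ f ∈ TA, ∀ g ∈ TA, f ∘ g ∈ TA) {f g g' : Ω → Ω}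
    (hg : g ∈ secretSet simB TA TB f) (hg' : g' ∈ secretSet simB TA TB f) :
    g ∘ g' ∈ secretSet simB TA TB f :=
  ⟨hTAcomp g hg.1 g' hg'.1, hg.2.1.comp hg'.2.1, hg.2.2.comp hg'.2.2⟩

end Secrecy

theorem secret_monoid_general {Ω : Type*} (TA TB : Set (Ω → Ω))
    (simB : Ω → Ω → Prop) (hequiv : Equivalence simB)
    -- `𝒯_A ⊆ 𝒯` is a submonoid
    (hTAid : id ∈ TA) (hTAcomp : ∀ f ∈ TA, ∀ g ∈ TA, f ∘ g ∈ TA)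
    (f : Ω → Ω) :
    id ∈ secretSet simB TA TB f ∧
      ∀ fA ∈ secretSet simB TA TB f, ∀ gA ∈ secretSet simB TA TB f,
        fA ∘ gA ∈ secretSet simB TA TB f := by
  have := hequiv.stdRefl
  have := hequiv.isTrans
  exact ⟨id_mem_secretSet hTAid f, fun _ hfA _ hgA => comp_mem_secretSet hTAcomp hfA hgA⟩

/-- **Secret monoid.** The set `𝒯_A^S` of elements of a submonoid `𝒯_A ⊆ 𝒯` that are
secret towards `B` and secret towards `B` in the presence of `f ∈ 𝒯` forms a monoid:
it contains `id` and is closed under composition. -/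
theorem secret_monoid {Ω : Type*} (T TA TB : Set (Ω → Ω))
    (simB : Ω → Ω → Prop) (hequiv : Equivalence simB)
    -- `𝒯` is a submonoid of functions `Ω → Ω`
    (hTid : id ∈ T) (hTcomp : ∀ f ∈ T, ∀ g ∈ T, f ∘ g ∈ T)
    -- `𝒯_A ⊆ 𝒯` is a submonoid
    (hTA : TA ⊆ T) (hTAid : id ∈ TA) (hTAcomp : ∀ f ∈ TA, ∀ g ∈ TA, f ∘ g ∈ TA)
    -- `𝒯_B ⊆ 𝒯` is a submonoid
    (hTB : TB ⊆ T) (hTBid : id ∈ TB) (hTBcomp : ∀ f ∈ TB, ∀ g ∈ TB, f ∘ g ∈ TB)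
    (f : Ω → Ω) (hf : f ∈ T) :
    id ∈ secretSet simB TA TB f ∧
      ∀ fA ∈ secretSet simB TA TB f, ∀ gA ∈ secretSet simB TA TB f,
        fA ∘ gA ∈ secretSet simB TA TB f :=
  secret_monoid_general TA TB simB hequiv hTAid hTAcomp f
end

section
/- Let 𝒯_A, 𝒯_B ⊆ 𝒯 be submonoids that commute (f_B(g_A(ρ)) = g_A(f_B(ρ)) for all ρ ∈ Ω, g_A ∈ 𝒯_A, f_B ∈ 𝒯_B), and let ∼_B be an equivalence relation on Ω. If g_A(ρ) ∼_B ρ for all ρ ∈ Ω and g_A ∈ 𝒯_A, then 𝒯_A is secret towards the agent B = (∼_B, 𝒯_B), i.e., f_B(g_A(ρ)) ∼_B f_B(ρ) for all ρ ∈ Ω, g_A ∈ 𝒯_A, f_B ∈ 𝒯_B. -/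
theorem secrecy_commuting_general {Ω : Type*} (TA TB : Set (Ω → Ω))
    (simB : Ω → Ω → Prop)
    -- `𝒯_A` and `𝒯_B` commute
    (hcomm : ∀ ρ : Ω, ∀ gA ∈ TA, ∀ fB ∈ TB, fB (gA ρ) = gA (fB ρ))
    -- independence condition
    (hcond : ∀ ρ : Ω, ∀ gA ∈ TA, simB (gA ρ) ρ) :
    -- conclusion: secrecy of `𝒯_A` towards `B`
    ∀ ρ : Ω, ∀ gA ∈ TA, ∀ fB ∈ TB, simB (fB (gA ρ)) (fB ρ) := by
  intro ρ gA hgA fB hfB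
  rw [hcomm ρ gA hgA fB hfB]
  exact hcond (fB ρ) gA hgA

/-- **Secrecy for commuting agents.** If `𝒯_A` and `𝒯_B` commute and
`g_A(ρ) ∼_B ρ` for all `ρ ∈ Ω` and `g_A ∈ 𝒯_A`, then `𝒯_A` is secret towards the agent
`B = (∼_B, 𝒯_B)`. -/
theorem secrecy_commuting {Ω : Type*} (T TA TB : Set (Ω → Ω))
    (simB : Ω → Ω → Prop) (hequiv : Equivalence simB)
    -- `𝒯` is a submonoid of functions `Ω → Ω`
    (hTid : id ∈ T) (hTcomp : ∀ f ∈ T, ∀ g ∈ T, f ∘ g ∈ T)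
    -- `𝒯_A, 𝒯_B ⊆ 𝒯` are submonoids
    (hTA : TA ⊆ T) (hTAid : id ∈ TA) (hTAcomp : ∀ f ∈ TA, ∀ g ∈ TA, f ∘ g ∈ TA)
    (hTB : TB ⊆ T) (hTBid : id ∈ TB) (hTBcomp : ∀ f ∈ TB, ∀ g ∈ TB, f ∘ g ∈ TB)
    -- `𝒯_A` and `𝒯_B` commute
    (hcomm : ∀ ρ : Ω, ∀ gA ∈ TA, ∀ fB ∈ TB, fB (gA ρ) = gA (fB ρ))
    -- independence condition
    (hcond : ∀ ρ : Ω, ∀ gA ∈ TA, simB (gA ρ) ρ) :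
    -- conclusion: secrecy of `𝒯_A` towards `B`
    ∀ ρ : Ω, ∀ gA ∈ TA, ∀ fB ∈ TB, simB (fB (gA ρ)) (fB ρ) :=
  secrecy_commuting_general TA TB simB hcomm hcond
end

section
/- Let 𝒯_A, 𝒯_B ⊆ 𝒯 be commuting submonoids (f_B ∘ g_A = g_A ∘ f_B pointwise for all g_A ∈ 𝒯_A, f_B ∈ 𝒯_B). Then the agents A = (∼_{∖B}, 𝒯_A) and B = (∼_{∖A}, 𝒯_B) are mutually secret: f_B(g_A(ρ)) ∼_{∖A} f_B(ρ) and g_A(f_B(ρ)) ∼_{∖B} g_A(ρ) for all ρ ∈ Ω, g_A ∈ 𝒯_A and f_B ∈ 𝒯_B. -/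
/-- Convergence through `𝒯_A`: `ρ ∼'_{∖A} σ` iff `∃ f_A, g_A ∈ 𝒯_A` with
`f_A(ρ) = g_A(σ)`. -/
def convergesThrough {Ω : Type*} (TA : Set (Ω → Ω)) (ρ σ : Ω) : Prop :=
  ∃ fA ∈ TA, ∃ gA ∈ TA, fA ρ = gA σ

/-- The induced perspective `∼_{∖A}`: the transitive closure of `∼'_{∖A}`. -/
def inducedPerspective {Ω : Type*} (TA : Set (Ω → Ω)) : Ω → Ω → Prop :=
  Relation.TransGen (convergesThrough TA)

theorem convergesThrough_apply_left {Ω : Type*} {TA : Set (Ω → Ω)} (hid : id ∈ TA)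
    {g : Ω → Ω} (hg : g ∈ TA) (σ : Ω) : convergesThrough TA (g σ) σ :=
  ⟨id, hid, g, hg, rfl⟩

theorem inducedPerspective_apply_left {Ω : Type*} {TA : Set (Ω → Ω)} (hid : id ∈ TA)
    {g : Ω → Ω} (hg : g ∈ TA) (σ : Ω) : inducedPerspective TA (g σ) σ :=
  Relation.TransGen.single (convergesThrough_apply_left hid hg σ)

theorem deriving_secret_agents_general {Ω : Type*} (TA TB : Set (Ω → Ω))
    -- `𝒯_A, 𝒯_B ⊆ 𝒯` are submonoids
    (hTAid : id ∈ TA)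
    (hTBid : id ∈ TB)
    -- `𝒯_A` and `𝒯_B` commute
    (hcomm : ∀ ρ : Ω, ∀ gA ∈ TA, ∀ fB ∈ TB, fB (gA ρ) = gA (fB ρ)) :
    -- mutual secrecy: `𝒯_A` is secret towards `B = (∼_{∖A}, 𝒯_B)` and vice versa
    ∀ ρ : Ω, ∀ gA ∈ TA, ∀ fB ∈ TB,
      inducedPerspective TA (fB (gA ρ)) (fB ρ) ∧
      inducedPerspective TB (gA (fB ρ)) (gA ρ) := by
  intro ρ gA hgA fB hfB
  have hswap := hcomm ρ gA hgA fB hfB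
  exact ⟨hswap ▸ inducedPerspective_apply_left hTAid hgA (fB ρ),
    hswap ▸ inducedPerspective_apply_left hTBid hfB (gA ρ)⟩

/-- **Deriving secret agents.** Commuting submonoids `𝒯_A, 𝒯_B ⊆ 𝒯` give rise to
mutually secret agents `A = (∼_{∖B}, 𝒯_A)` and `B = (∼_{∖A}, 𝒯_B)`. -/
theorem deriving_secret_agents {Ω : Type*} (T TA TB : Set (Ω → Ω))
    -- `𝒯` is a submonoid of functions `Ω → Ω`
    (hTid : id ∈ T) (hTcomp : ∀ f ∈ T, ∀ g ∈ T, f ∘ g ∈ T)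
    -- `𝒯_A, 𝒯_B ⊆ 𝒯` are submonoids
    (hTA : TA ⊆ T) (hTAid : id ∈ TA) (hTAcomp : ∀ f ∈ TA, ∀ g ∈ TA, f ∘ g ∈ TA)
    (hTB : TB ⊆ T) (hTBid : id ∈ TB) (hTBcomp : ∀ f ∈ TB, ∀ g ∈ TB, f ∘ g ∈ TB)
    -- `𝒯_A` and `𝒯_B` commute
    (hcomm : ∀ ρ : Ω, ∀ gA ∈ TA, ∀ fB ∈ TB, fB (gA ρ) = gA (fB ρ)) :
    -- mutual secrecy: `𝒯_A` is secret towards `B = (∼_{∖A}, 𝒯_B)` and vice versa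
    ∀ ρ : Ω, ∀ gA ∈ TA, ∀ fB ∈ TB,
      inducedPerspective TA (fB (gA ρ)) (fB ρ) ∧
      inducedPerspective TB (gA (fB ρ)) (gA ρ) :=
  deriving_secret_agents_general TA TB hTAid hTBid hcomm
end

section
/- Let 𝒯_A, 𝒯_B ⊆ 𝒯 be submonoids that commute, and let B = (∼_B, 𝒯_B) be an agent such that 𝒯_A is secret towards B. Then the induced perspective is minimal: for all ρ, σ ∈ Ω, ρ ∼_{∖A} σ implies ρ ∼_B σ (equivalently, [ρ]_{∖A} ⊆ [ρ]_B for every ρ ∈ Ω). -/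
section

variable {Ω : Type*} {TA : Set (Ω → Ω)} {r : Ω → Ω → Prop}

theorem convergesThrough_le (hr : Equivalence r) (hTA : ∀ ρ, ∀ g ∈ TA, r (g ρ) ρ) :
    convergesThrough TA ≤ r := by
  rintro ρ σ ⟨f, hf, g, hg, hfg⟩
  have hρ : r ρ (f ρ) := hr.symm (hTA ρ f hf)
  have hσ : r (g σ) σ := hTA σ g hg
  exact hr.trans hρ (hfg ▸ hσ)

theorem inducedPerspective_le (hr : Equivalence r) (hTA : ∀ ρ, ∀ g ∈ TA, r (g ρ) ρ) :
    inducedPerspective TA ≤ r :=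
  have : IsTrans Ω r := ⟨fun _ _ _ => hr.trans⟩
  Relation.transGen_minimal (convergesThrough_le hr hTA)

end

theorem induced_perspective_minimal_general {Ω : Type*} (TA TB : Set (Ω → Ω))
    (simB : Ω → Ω → Prop) (hequiv : Equivalence simB)
    -- `𝒯_A, 𝒯_B ⊆ 𝒯` are submonoids
    (hTBid : id ∈ TB)
    -- `𝒯_A` is secret towards `B`
    (hsecret : ∀ ρ : Ω, ∀ gA ∈ TA, ∀ fB ∈ TB, simB (fB (gA ρ)) (fB ρ)) :
    ∀ ρ σ : Ω, inducedPerspective TA ρ σ → simB ρ σ :=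
  inducedPerspective_le hequiv fun ρ gA hgA => hsecret ρ gA hgA id hTBid

/-- **Induced perspective is minimal.** If `𝒯_A` and `𝒯_B` commute and `𝒯_A` is secret
towards the agent `B = (∼_B, 𝒯_B)`, then `ρ ∼_{∖A} σ` implies `ρ ∼_B σ`, i.e.
`[ρ]_{∖A} ⊆ [ρ]_B` for all `ρ`. -/
theorem induced_perspective_minimal {Ω : Type*} (T TA TB : Set (Ω → Ω))
    (simB : Ω → Ω → Prop) (hequiv : Equivalence simB)
    -- `𝒯` is a submonoid of functions `Ω → Ω`
    (hTid : id ∈ T) (hTcomp : ∀ f ∈ T, ∀ g ∈ T, f ∘ g ∈ T)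
    -- `𝒯_A, 𝒯_B ⊆ 𝒯` are submonoids
    (hTA : TA ⊆ T) (hTAid : id ∈ TA) (hTAcomp : ∀ f ∈ TA, ∀ g ∈ TA, f ∘ g ∈ TA)
    (hTB : TB ⊆ T) (hTBid : id ∈ TB) (hTBcomp : ∀ f ∈ TB, ∀ g ∈ TB, f ∘ g ∈ TB)
    -- `𝒯_A` and `𝒯_B` commute
    (hcomm : ∀ ρ : Ω, ∀ gA ∈ TA, ∀ fB ∈ TB, fB (gA ρ) = gA (fB ρ))
    -- `𝒯_A` is secret towards `B`
    (hsecret : ∀ ρ : Ω, ∀ gA ∈ TA, ∀ fB ∈ TB, simB (fB (gA ρ)) (fB ρ)) :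
    ∀ ρ σ : Ω, inducedPerspective TA ρ σ → simB ρ σ :=
  induced_perspective_minimal_general TA TB simB hequiv hTBid hsecret
end

section
/- Let 𝒯_A, 𝒯_B ⊆ 𝒯 be submonoids that commute (f_B ∘ g_A = g_A ∘ f_B pointwise for all g_A ∈ 𝒯_A, f_B ∈ 𝒯_B). Then the induced perspective ∼_{∖A} is preserved by 𝒯_B: for all ω, ρ ∈ Ω and every f_B ∈ 𝒯_B, ω ∼_{∖A} ρ implies f_B(ω) ∼_{∖A} f_B(ρ). -/
section

variable {Ω : Type*} {TA : Set (Ω → Ω)} {f : Ω → Ω}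

theorem convergesThrough.map_of_commute (hf : ∀ g ∈ TA, Function.Commute f g) {ρ σ : Ω}
    (h : convergesThrough TA ρ σ) : convergesThrough TA (f ρ) (f σ) := by
  obtain ⟨gA, hgA, hA, hhA, heq⟩ := h
  exact ⟨gA, hgA, hA, hhA, by rw [← hf gA hgA ρ, ← hf hA hhA σ, heq]⟩

theorem inducedPerspective.map_of_commute (hf : ∀ g ∈ TA, Function.Commute f g) {ρ σ : Ω}
    (h : inducedPerspective TA ρ σ) : inducedPerspective TA (f ρ) (f σ) :=
  Relation.TransGen.lift f (fun _ _ => convergesThrough.map_of_commute hf) ρ σ h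

end

theorem induced_perspective_operational_general {Ω : Type*} (TA TB : Set (Ω → Ω))
    -- `𝒯_A` and `𝒯_B` commute
    (hcomm : ∀ ρ : Ω, ∀ gA ∈ TA, ∀ fB ∈ TB, fB (gA ρ) = gA (fB ρ)) :
    ∀ ω ρ : Ω, ∀ fB ∈ TB,
      inducedPerspective TA ω ρ → inducedPerspective TA (fB ω) (fB ρ) :=
  fun _ _ fB hfB h => h.map_of_commute fun gA hgA ρ => hcomm ρ gA hgA fB hfB

/-- **Induced perspective is operational.** If `𝒯_A` and `𝒯_B` commute, then the induced
perspective `∼_{∖A}` is preserved by every `f_B ∈ 𝒯_B`: `ω ∼_{∖A} ρ` implies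
`f_B(ω) ∼_{∖A} f_B(ρ)`. -/
theorem induced_perspective_operational {Ω : Type*} (T TA TB : Set (Ω → Ω))
    -- `𝒯` is a submonoid of functions `Ω → Ω`
    (hTid : id ∈ T) (hTcomp : ∀ f ∈ T, ∀ g ∈ T, f ∘ g ∈ T)
    -- `𝒯_A, 𝒯_B ⊆ 𝒯` are submonoids
    (hTA : TA ⊆ T) (hTAid : id ∈ TA) (hTAcomp : ∀ f ∈ TA, ∀ g ∈ TA, f ∘ g ∈ TA)
    (hTB : TB ⊆ T) (hTBid : id ∈ TB) (hTBcomp : ∀ f ∈ TB, ∀ g ∈ TB, f ∘ g ∈ TB)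
    -- `𝒯_A` and `𝒯_B` commute
    (hcomm : ∀ ρ : Ω, ∀ gA ∈ TA, ∀ fB ∈ TB, fB (gA ρ) = gA (fB ρ)) :
    ∀ ω ρ : Ω, ∀ fB ∈ TB,
      inducedPerspective TA ω ρ → inducedPerspective TA (fB ω) (fB ρ) :=
  induced_perspective_operational_general TA TB hcomm
end

section
/- Let 𝒯_A^S, 𝒯_B ⊆ 𝒯 be submonoids and f ∈ 𝒯, and let ∼_B be the relation constructed from 𝒯_A^S, 𝒯_B and f as in the context. Then ∼_B is an equivalence relation on Ω, and 𝒯_A^S is both secret towards the agent (∼_B, 𝒯_B) and secret towards (∼_B, 𝒯_B) in the presence of f: f_B(g_A(ρ)) ∼_B f_B(ρ) and f_B(f(f'_B(g_A(ρ)))) ∼_B f_B(f(f'_B(ρ))) for all ρ ∈ Ω, g_A ∈ 𝒯_A^S, f_B, f'_B ∈ 𝒯_B. -/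
/-- The relation `∼`: `ρ ∼ σ` iff `∃ f_A, g_A ∈ 𝒯_A^S` with `f_A(ρ) = g_A(σ)`. -/
def simBase {Ω : Type*} (TAS : Set (Ω → Ω)) (ρ σ : Ω) : Prop :=
  ∃ fA ∈ TAS, ∃ gA ∈ TAS, fA ρ = gA σ

/-- The relation `∼'` built from `∼`, `𝒯_B` and a global transformation `f`. -/
def simStep {Ω : Type*} (TAS TB : Set (Ω → Ω)) (f : Ω → Ω) (ρ σ : Ω) : Prop :=
  simBase TAS ρ σ ∨
  (∃ ρ' σ' : Ω, ∃ fB ∈ TB, ρ = fB ρ' ∧ σ = fB σ' ∧ simBase TAS ρ' σ') ∨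
  (∃ ρ' σ' : Ω, ∃ fB ∈ TB, ∃ fB' ∈ TB,
    ρ = fB (f (fB' ρ')) ∧ σ = fB (f (fB' σ')) ∧ simBase TAS ρ' σ')

/-- The constructed relation `∼_B`: the transitive closure of `∼'`. -/
def simConstructed {Ω : Type*} (TAS TB : Set (Ω → Ω)) (f : Ω → Ω) : Ω → Ω → Prop :=
  Relation.TransGen (simStep TAS TB f)

/-! Since `id ∈ 𝒯_A^S`, the relation `∼` is reflexive and relates `g_A(ρ)` to `ρ` (take
`f_A = id`). So `∼'` is reflexive and symmetric and contains both required families of pairs by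
its second and third clauses; its transitive closure is then an equivalence. -/

theorem Relation.equivalence_transGen {α : Type*} {r : α → α → Prop} (hrefl : ∀ a, r a a)
    (hsymm : ∀ {a b}, r a b → r b a) : Equivalence (TransGen r) where
  refl a := .single (hrefl a)
  symm h := transGen_swap.mp (TransGen.mono (fun _ _ ↦ hsymm) _ _ h)
  trans := .trans

section

variable {Ω : Type*} {TAS TB : Set (Ω → Ω)} {f : Ω → Ω}

theorem simBase_refl (hid : id ∈ TAS) (ρ : Ω) : simBase TAS ρ ρ :=
  ⟨id, hid, id, hid, rfl⟩

theorem simBase_symm {ρ σ : Ω} : simBase TAS ρ σ → simBase TAS σ ρ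
  | ⟨fA, hfA, gA, hgA, h⟩ => ⟨gA, hgA, fA, hfA, h.symm⟩

theorem simBase_apply_left (hid : id ∈ TAS) {gA : Ω → Ω} (hgA : gA ∈ TAS) (ρ : Ω) :
    simBase TAS (gA ρ) ρ :=
  ⟨id, hid, gA, hgA, rfl⟩

theorem simStep_symm {ρ σ : Ω} : simStep TAS TB f ρ σ → simStep TAS TB f σ ρ := by
  rintro (h | ⟨ρ', σ', fB, hfB, rfl, rfl, h⟩ | ⟨ρ', σ', fB, hfB, fB', hfB', rfl, rfl, h⟩)
  · exact .inl (simBase_symm h)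
  · exact .inr (.inl ⟨σ', ρ', fB, hfB, rfl, rfl, simBase_symm h⟩)
  · exact .inr (.inr ⟨σ', ρ', fB, hfB, fB', hfB', rfl, rfl, simBase_symm h⟩)

theorem simConstructed_equivalence (hid : id ∈ TAS) : Equivalence (simConstructed TAS TB f) :=
  Relation.equivalence_transGen (fun ρ ↦ .inl (simBase_refl hid ρ)) simStep_symm

theorem simConstructed_apply_of_simBase {fB : Ω → Ω} (hfB : fB ∈ TB) {ρ σ : Ω}
    (h : simBase TAS ρ σ) : simConstructed TAS TB f (fB ρ) (fB σ) :=
  .single (.inr (.inl ⟨ρ, σ, fB, hfB, rfl, rfl, h⟩))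

theorem simConstructed_apply_comp_of_simBase {fB fB' : Ω → Ω} (hfB : fB ∈ TB) (hfB' : fB' ∈ TB)
    {ρ σ : Ω} (h : simBase TAS ρ σ) :
    simConstructed TAS TB f (fB (f (fB' ρ))) (fB (f (fB' σ))) :=
  .single (.inr (.inr ⟨ρ, σ, fB, hfB, fB', hfB', rfl, rfl, h⟩))

end

theorem constructed_relation_secret_general {Ω : Type*} (TAS TB : Set (Ω → Ω))
    (hTASid : id ∈ TAS) (f : Ω → Ω) :
    Equivalence (simConstructed TAS TB f) ∧
    -- `𝒯_A^S` is secret towards `(∼_B, 𝒯_B)`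
    (∀ ρ : Ω, ∀ gA ∈ TAS, ∀ fB ∈ TB,
      simConstructed TAS TB f (fB (gA ρ)) (fB ρ)) ∧
    -- `𝒯_A^S` is secret towards `(∼_B, 𝒯_B)` in the presence of `f`
    (∀ ρ : Ω, ∀ gA ∈ TAS, ∀ fB ∈ TB, ∀ fB' ∈ TB,
      simConstructed TAS TB f (fB (f (fB' (gA ρ)))) (fB (f (fB' ρ)))) :=
  ⟨simConstructed_equivalence hTASid,
    fun ρ _ hgA _ hfB ↦ simConstructed_apply_of_simBase hfB (simBase_apply_left hTASid hgA ρ),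
    fun ρ _ hgA _ hfB _ hfB' ↦
      simConstructed_apply_comp_of_simBase hfB hfB' (simBase_apply_left hTASid hgA ρ)⟩

/-- **Deriving secret agents without commutation.** The constructed relation `∼_B` is an
equivalence relation on `Ω`, towards which `𝒯_A^S` is secret and also secret in the
presence of `f`. -/
theorem constructed_relation_secret {Ω : Type*} (T TAS TB : Set (Ω → Ω))
    -- `𝒯` is a submonoid of functions `Ω → Ω`
    (hTid : id ∈ T) (hTcomp : ∀ f ∈ T, ∀ g ∈ T, f ∘ g ∈ T)
    -- `𝒯_A^S, 𝒯_B ⊆ 𝒯` are submonoids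
    (hTAS : TAS ⊆ T) (hTASid : id ∈ TAS)
    (hTAScomp : ∀ f ∈ TAS, ∀ g ∈ TAS, f ∘ g ∈ TAS)
    (hTB : TB ⊆ T) (hTBid : id ∈ TB) (hTBcomp : ∀ f ∈ TB, ∀ g ∈ TB, f ∘ g ∈ TB)
    (f : Ω → Ω) (hf : f ∈ T) :
    Equivalence (simConstructed TAS TB f) ∧
    -- `𝒯_A^S` is secret towards `(∼_B, 𝒯_B)`
    (∀ ρ : Ω, ∀ gA ∈ TAS, ∀ fB ∈ TB,
      simConstructed TAS TB f (fB (gA ρ)) (fB ρ)) ∧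
    -- `𝒯_A^S` is secret towards `(∼_B, 𝒯_B)` in the presence of `f`
    (∀ ρ : Ω, ∀ gA ∈ TAS, ∀ fB ∈ TB, ∀ fB' ∈ TB,
      simConstructed TAS TB f (fB (f (fB' (gA ρ)))) (fB (f (fB' ρ)))) :=
  constructed_relation_secret_general TAS TB hTASid f
end

section
/- Let 𝒯_A^S, 𝒯_B ⊆ 𝒯 be submonoids and f ∈ 𝒯, and let ∼_B be the relation constructed from 𝒯_A^S, 𝒯_B and f as in the context. Then ∼_B is the smallest such equivalence relation: for any equivalence relation ≈ on Ω such that 𝒯_A^S is secret towards the agent (≈, 𝒯_B) and secret towards (≈, 𝒯_B) in the presence of f, one has ρ ∼_B σ implies ρ ≈ σ for all ρ, σ ∈ Ω. -/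
section Secrecy

variable {Ω : Type*} {TAS TB : Set (Ω → Ω)} {f : Ω → Ω} {approx : Ω → Ω → Prop}

theorem simBase.rel_apply_of_secret (happrox : Equivalence approx) {h : Ω → Ω}
    (hsecret : ∀ ρ : Ω, ∀ gA ∈ TAS, approx (h (gA ρ)) (h ρ)) {ρ σ : Ω}
    (hρσ : simBase TAS ρ σ) : approx (h ρ) (h σ) := by
  obtain ⟨fA, hfA, gA, hgA, heq⟩ := hρσ
  have hσ : approx (h (fA ρ)) (h σ) := heq ▸ hsecret σ gA hgA
  exact happrox.trans (happrox.symm (hsecret ρ fA hfA)) hσ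

theorem simStep.rel_of_secret (happrox : Equivalence approx) (hTBid : id ∈ TB)
    (hsecret : ∀ ρ : Ω, ∀ gA ∈ TAS, ∀ fB ∈ TB, approx (fB (gA ρ)) (fB ρ))
    (hext : ∀ ρ : Ω, ∀ gA ∈ TAS, ∀ fB ∈ TB, ∀ fB' ∈ TB,
      approx (fB (f (fB' (gA ρ)))) (fB (f (fB' ρ))))
    {ρ σ : Ω} (hρσ : simStep TAS TB f ρ σ) : approx ρ σ := by
  rcases hρσ with hbase | ⟨ρ', σ', fB, hfB, rfl, rfl, hbase⟩ |
    ⟨ρ', σ', fB, hfB, fB', hfB', rfl, rfl, hbase⟩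
  · exact hbase.rel_apply_of_secret happrox (h := id) fun ρ gA hgA ↦
      hsecret ρ gA hgA id hTBid
  · exact hbase.rel_apply_of_secret happrox fun ρ gA hgA ↦ hsecret ρ gA hgA fB hfB
  · exact hbase.rel_apply_of_secret happrox (h := fun x ↦ fB (f (fB' x)))
      fun ρ gA hgA ↦ hext ρ gA hgA fB hfB fB' hfB'

end Secrecy

theorem constructed_relation_smallest_general {Ω : Type*} (TAS TB : Set (Ω → Ω))
    (hTBid : id ∈ TB)
    (f : Ω → Ω)
    -- any equivalence relation `≈` with the secrecy properties
    (approx : Ω → Ω → Prop) (happrox : Equivalence approx)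
    (hsecret : ∀ ρ : Ω, ∀ gA ∈ TAS, ∀ fB ∈ TB, approx (fB (gA ρ)) (fB ρ))
    (hext : ∀ ρ : Ω, ∀ gA ∈ TAS, ∀ fB ∈ TB, ∀ fB' ∈ TB,
      approx (fB (f (fB' (gA ρ)))) (fB (f (fB' ρ)))) :
    ∀ ρ σ : Ω, simConstructed TAS TB f ρ σ → approx ρ σ := by
  have : IsTrans Ω approx := ⟨fun _ _ _ ↦ happrox.trans⟩
  exact Relation.transGen_minimal fun _ _ ↦ simStep.rel_of_secret happrox hTBid hsecret hext

/-- **Minimality of the constructed relation.** The constructed relation `∼_B` is the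
smallest equivalence relation on `Ω` towards which `𝒯_A^S` is secret and secret in the
presence of `f`: any such equivalence relation `≈` contains `∼_B`. -/
theorem constructed_relation_smallest {Ω : Type*} (T TAS TB : Set (Ω → Ω))
    -- `𝒯` is a submonoid of functions `Ω → Ω`
    (hTid : id ∈ T) (hTcomp : ∀ f ∈ T, ∀ g ∈ T, f ∘ g ∈ T)
    -- `𝒯_A^S, 𝒯_B ⊆ 𝒯` are submonoids
    (hTAS : TAS ⊆ T) (hTASid : id ∈ TAS)
    (hTAScomp : ∀ f ∈ TAS, ∀ g ∈ TAS, f ∘ g ∈ TAS)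
    (hTB : TB ⊆ T) (hTBid : id ∈ TB) (hTBcomp : ∀ f ∈ TB, ∀ g ∈ TB, f ∘ g ∈ TB)
    (f : Ω → Ω) (hf : f ∈ T)
    -- any equivalence relation `≈` with the secrecy properties
    (approx : Ω → Ω → Prop) (happrox : Equivalence approx)
    (hsecret : ∀ ρ : Ω, ∀ gA ∈ TAS, ∀ fB ∈ TB, approx (fB (gA ρ)) (fB ρ))
    (hext : ∀ ρ : Ω, ∀ gA ∈ TAS, ∀ fB ∈ TB, ∀ fB' ∈ TB,
      approx (fB (f (fB' (gA ρ)))) (fB (f (fB' ρ)))) :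
    ∀ ρ σ : Ω, simConstructed TAS TB f ρ σ → approx ρ σ :=
  constructed_relation_smallest_general TAS TB hTBid f approx happrox hsecret hext
end

section
/- Let 𝒯_A^S, 𝒯_B ⊆ 𝒯 be commuting submonoids (f_B ∘ g_A = g_A ∘ f_B pointwise for all g_A ∈ 𝒯_A^S, f_B ∈ 𝒯_B), and take f = id in the construction of ∼_B from the context. Then ∼_B coincides with the induced perspective of 𝒯_A^S: for all ρ, σ ∈ Ω, ρ ∼_B σ if and only if ρ and σ are related by the transitive closure of the relation ρ ∼ σ ⟺ ∃ f_A, g_A ∈ 𝒯_A^S with f_A(ρ) = g_A(σ). -/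
/-
With `f = id`, the two extra clauses of `∼'` only relate pairs `(g ρ', g σ')` with `ρ' ∼ σ'` and
`g ∈ 𝒯_B` (a single element, or a composite of two). Since `g` commutes with `𝒯_A^S`, applying
`g` to a witness `f_A ρ' = g_A σ'` gives `f_A (g ρ') = g_A (g σ')`, so `∼` is already closed
under these maps and `∼' = ∼`; the transitive closures then agree.
-/

theorem simBase.map {Ω : Type*} {TAS : Set (Ω → Ω)} {g : Ω → Ω}
    (hg : ∀ ρ : Ω, ∀ gA ∈ TAS, g (gA ρ) = gA (g ρ)) {ρ σ : Ω} (h : simBase TAS ρ σ) :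
    simBase TAS (g ρ) (g σ) := by
  obtain ⟨fA, hfA, gA, hgA, heq⟩ := h
  exact ⟨fA, hfA, gA, hgA, by rw [← hg ρ fA hfA, ← hg σ gA hgA, heq]⟩

theorem simStep_id_iff_simBase {Ω : Type*} {TAS TB : Set (Ω → Ω)}
    (hcomm : ∀ ρ : Ω, ∀ gA ∈ TAS, ∀ fB ∈ TB, fB (gA ρ) = gA (fB ρ)) (ρ σ : Ω) :
    simStep TAS TB id ρ σ ↔ simBase TAS ρ σ := by
  have map {fB} (hfB : fB ∈ TB) {ρ σ : Ω} (h : simBase TAS ρ σ) : simBase TAS (fB ρ) (fB σ) :=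
    h.map fun ρ gA hgA => hcomm ρ gA hgA fB hfB
  refine ⟨?_, Or.inl⟩
  rintro (h | ⟨ρ', σ', fB, hfB, rfl, rfl, h⟩ | ⟨ρ', σ', fB, hfB, fB', hfB', rfl, rfl, h⟩)
  · exact h
  · exact map hfB h
  · exact map hfB (map hfB' h)

theorem constructed_relation_commuting_id_general {Ω : Type*} (TAS TB : Set (Ω → Ω))
    -- `𝒯_A^S` and `𝒯_B` commute
    (hcomm : ∀ ρ : Ω, ∀ gA ∈ TAS, ∀ fB ∈ TB, fB (gA ρ) = gA (fB ρ)) :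
    ∀ ρ σ : Ω,
      simConstructed TAS TB (id : Ω → Ω) ρ σ ↔
        Relation.TransGen (simBase TAS) ρ σ := by
  have hstep : simStep TAS TB id = simBase TAS := by
    ext ρ σ
    exact simStep_id_iff_simBase hcomm ρ σ
  intro ρ σ
  rw [simConstructed, hstep]

/-- **Recovering the induced perspective.** For commuting submonoids `𝒯_A^S` and `𝒯_B`
and `f = id`, the constructed relation `∼_B` coincides with the induced perspective of
`𝒯_A^S`, i.e. the transitive closure of `∼`. -/
theorem constructed_relation_commuting_id {Ω : Type*} (T TAS TB : Set (Ω → Ω))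
    -- `𝒯` is a submonoid of functions `Ω → Ω`
    (hTid : id ∈ T) (hTcomp : ∀ f ∈ T, ∀ g ∈ T, f ∘ g ∈ T)
    -- `𝒯_A^S, 𝒯_B ⊆ 𝒯` are submonoids
    (hTAS : TAS ⊆ T) (hTASid : id ∈ TAS)
    (hTAScomp : ∀ f ∈ TAS, ∀ g ∈ TAS, f ∘ g ∈ TAS)
    (hTB : TB ⊆ T) (hTBid : id ∈ TB) (hTBcomp : ∀ f ∈ TB, ∀ g ∈ TB, f ∘ g ∈ TB)
    -- `𝒯_A^S` and `𝒯_B` commute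
    (hcomm : ∀ ρ : Ω, ∀ gA ∈ TAS, ∀ fB ∈ TB, fB (gA ρ) = gA (fB ρ)) :
    ∀ ρ σ : Ω,
      simConstructed TAS TB (id : Ω → Ω) ρ σ ↔
        Relation.TransGen (simBase TAS) ρ σ :=
  constructed_relation_commuting_id_general TAS TB hcomm
end

section
/- Let P be a box on two bits, i.e., P : Bool × Bool → Bool × Bool → ℝ, written P(x,y|a,b), with P(x,y|a,b) ≥ 0 and ∑_{x,y} P(x,y|a,b) = 1 for each (a,b). Then P is non-signalling from Alice to Bob in the traditional sense (∑_x P(x,y|0,b) = ∑_x P(x,y|1,b) for all y, b ∈ Bool) if and only if the following extended-secrecy condition holds: for every probability distribution Q on Bool × Bool (Q ≥ 0 and ∑_{a,b} Q(a,b) = 1), every local stochastic map G : Bool → Bool → ℝ acting on Alice's input (G(a'|a) ≥ 0 and ∑_{a'} G(a'|a) = 1 for each a), every local stochastic map H : Bool → Bool → ℝ acting on Bob's output (H(y'|y) ≥ 0 and ∑_{y'} H(y'|y) = 1 for each y), and every y' ∈ Bool, one has ∑_{a,a',b,x,y} H(y'|y) · P(x,y|a',b) · G(a'|a) · Q(a,b)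 = ∑_{a,b,x,y} H(y'|y) · P(x,y|a,b) · Q(a,b). -/
/-!
Both sides only see Bob's marginal `∑ x, P (x, y) (a, b)`. If it does not depend on `a`, relabelling
Alice's input by a stochastic map `G` changes nothing, because the columns of `G` sum to one.
Conversely, a point mass `Q` at `(a₀, b)`, the constant map `G` onto `a₁` and `H = id` turn extended
secrecy into the equality of the marginals at `a₀` and `a₁`.
-/

section
variable {R A B X Y : Type*} [CommSemiring R] [Fintype A] [Fintype B] [Fintype X] [Fintype Y]

omit [Fintype A] [Fintype B] in
lemma sum_sum_mul_eq_sum_mul_marginal (P : X × Y → A × B → R) (f : Y → R) (c : A × B) (r : R) :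
    ∑ x, ∑ y, f y * P (x, y) c * r = ∑ y, f y * (∑ x, P (x, y) c) * r := by
  rw [Finset.sum_comm]
  simp only [Finset.mul_sum, Finset.sum_mul]

lemma sum_comp_inputChannel_eq_of_nonsignalling (P : X × Y → A × B → R)
    (hns : ∀ y b a a', ∑ x, P (x, y) (a, b) = ∑ x, P (x, y) (a', b))
    (G : A → A → R) (hG : ∀ a, ∑ a', G a' a = 1) (Q : A × B → R) (f : Y → R) :
    ∑ a, ∑ a', ∑ b, ∑ x, ∑ y, f y * P (x, y) (a', b) * G a' a * Q (a, b) =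
      ∑ a, ∑ b, ∑ x, ∑ y, f y * P (x, y) (a, b) * Q (a, b) := by
  refine Finset.sum_congr rfl fun a _ => ?_
  calc ∑ a', ∑ b, ∑ x, ∑ y, f y * P (x, y) (a', b) * G a' a * Q (a, b)
      = ∑ a', ∑ b, ∑ y, f y * (∑ x, P (x, y) (a', b)) * (G a' a * Q (a, b)) := by
        simp only [mul_assoc _ (G _ _), sum_sum_mul_eq_sum_mul_marginal]
    _ = ∑ a', G a' a * ∑ b, ∑ y, f y * (∑ x, P (x, y) (a, b)) * Q (a, b) := by
        simp only [hns _ _ _ a, Finset.mul_sum]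
        refine Finset.sum_congr rfl fun _ _ => Finset.sum_congr rfl fun _ _ =>
          Finset.sum_congr rfl fun _ _ => by ring
    _ = ∑ b, ∑ x, ∑ y, f y * P (x, y) (a, b) * Q (a, b) := by
        rw [← Finset.sum_mul, hG, one_mul]
        simp only [sum_sum_mul_eq_sum_mul_marginal]

end

section
variable {R A B X Y : Type*} [CommSemiring R] [PartialOrder R] [ZeroLEOneClass R]
  [Fintype A] [Fintype B] [Fintype X] [Fintype Y] [DecidableEq A] [DecidableEq B] [DecidableEq Y]

lemma marginal_eq_of_extendedSecrecy (P : X × Y → A × B → R)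
    (h : ∀ Q : A × B → R, (∀ a b, 0 ≤ Q (a, b)) → (∑ a, ∑ b, Q (a, b)) = 1 →
      ∀ G : A → A → R, (∀ a' a, 0 ≤ G a' a) → (∀ a, ∑ a', G a' a = 1) →
      ∀ H : Y → Y → R, (∀ y' y, 0 ≤ H y' y) → (∀ y, ∑ y', H y' y = 1) →
      ∀ y',
        (∑ a, ∑ a', ∑ b, ∑ x, ∑ y, H y' y * P (x, y) (a', b) * G a' a * Q (a, b)) =
          ∑ a, ∑ b, ∑ x, ∑ y, H y' y * P (x, y) (a, b) * Q (a, b))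
    (y : Y) (b : B) (a₀ a₁ : A) :
    ∑ x, P (x, y) (a₀, b) = ∑ x, P (x, y) (a₁, b) := by
  have key := h (fun p => if p = (a₀, b) then 1 else 0) (fun _ _ => by split_ifs <;> simp)
    (by simp [Prod.ext_iff, ite_and])
    (fun a' _ => if a' = a₁ then 1 else 0) (fun _ _ => by split_ifs <;> simp) (by simp)
    (fun y' y => if y' = y then 1 else 0) (fun _ _ => by split_ifs <;> simp) (by simp) y
  simpa [Prod.ext_iff, ite_and] using key.symm

end

theorem gpt_nonsignalling_equivalence_general
    (P : Bool × Bool → Bool × Bool → ℝ) :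
    -- traditional non-signalling from Alice to Bob
    (∀ y b : Bool,
        ∑ x : Bool, P (x, y) (false, b) = ∑ x : Bool, P (x, y) (true, b)) ↔
    -- extended secrecy
    (∀ Q : Bool × Bool → ℝ,
      (∀ a b : Bool, 0 ≤ Q (a, b)) →
      (∑ a : Bool, ∑ b : Bool, Q (a, b)) = 1 →
      ∀ G : Bool → Bool → ℝ,
        (∀ a' a : Bool, 0 ≤ G a' a) →
        (∀ a : Bool, ∑ a' : Bool, G a' a = 1) →
      ∀ H : Bool → Bool → ℝ,
        (∀ y' y : Bool, 0 ≤ H y' y) →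
        (∀ y : Bool, ∑ y' : Bool, H y' y = 1) →
      ∀ y' : Bool,
        (∑ a : Bool, ∑ a' : Bool, ∑ b : Bool, ∑ x : Bool, ∑ y : Bool,
            H y' y * P (x, y) (a', b) * G a' a * Q (a, b)) =
          ∑ a : Bool, ∑ b : Bool, ∑ x : Bool, ∑ y : Bool,
            H y' y * P (x, y) (a, b) * Q (a, b)) := by
  refine ⟨fun hns Q _ _ G _ hG H _ _ y' => ?_,
    fun h y b => marginal_eq_of_extendedSecrecy P h y b _ _⟩
  have hns' : ∀ y b a a', ∑ x, P (x, y) (a, b) = ∑ x, P (x, y) (a', b) := by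
    intro y b a a'
    cases a <;> cases a' <;> simp only [hns]
  exact sum_comp_inputChannel_eq_of_nonsignalling P hns' G hG Q (H y')

/-- **Equivalence to non-signalling in GPTs.** For a box `P(x,y|a,b)` on two bits, the
traditional non-signalling condition from Alice to Bob is equivalent to the
extended-secrecy condition: for every input distribution `Q`, every local stochastic
map `G` on Alice's input, every local stochastic map `H` on Bob's output, and every
`y'`, the output distribution of Bob does not depend on whether `G` was applied. -/
theorem gpt_nonsignalling_equivalence
    (P : Bool × Bool → Bool × Bool → ℝ)
    (hPnn : ∀ x y a b : Bool, 0 ≤ P (x, y) (a, b))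
    (hPnorm : ∀ a b : Bool, ∑ x : Bool, ∑ y : Bool, P (x, y) (a, b) = 1) :
    -- traditional non-signalling from Alice to Bob
    (∀ y b : Bool,
        ∑ x : Bool, P (x, y) (false, b) = ∑ x : Bool, P (x, y) (true, b)) ↔
    -- extended secrecy
    (∀ Q : Bool × Bool → ℝ,
      (∀ a b : Bool, 0 ≤ Q (a, b)) →
      (∑ a : Bool, ∑ b : Bool, Q (a, b)) = 1 →
      ∀ G : Bool → Bool → ℝ,
        (∀ a' a : Bool, 0 ≤ G a' a) →
        (∀ a : Bool, ∑ a' : Bool, G a' a = 1) →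
      ∀ H : Bool → Bool → ℝ,
        (∀ y' y : Bool, 0 ≤ H y' y) →
        (∀ y : Bool, ∑ y' : Bool, H y' y = 1) →
      ∀ y' : Bool,
        (∑ a : Bool, ∑ a' : Bool, ∑ b : Bool, ∑ x : Bool, ∑ y : Bool,
            H y' y * P (x, y) (a', b) * G a' a * Q (a, b)) =
          ∑ a : Bool, ∑ b : Bool, ∑ x : Bool, ∑ y : Bool,
            H y' y * P (x, y) (a, b) * Q (a, b)) :=
  gpt_nonsignalling_equivalence_general P
end
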